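/- For the affine Weyl group of sl_2, with σ_{2i} = t_{-iα^∨}, the Grassmannian Schubert localization values are ψ^m_{2i+2a} = (1-x)^m S_{≤a}^m(x) for m = 2i or 2i-1 and a ≥ 0, where x = e^α and S_{≤a}^i(x) = Σ_{j=0}^a x^j binom(j+i-1, i-1). -/

import Mathlib

/-!
STATEMENT 13: For the affine Weyl group of `sl₂`, with `σ_{2i} = t_{-iα^∨}`,
the Grassmannian Schubert localization values are
`ψ^m_{2i+2a} = (1-x)^m S_{≤a}^m(x)` for `m = 2i` or `m = 2i-1` and `a ≥ 0`,
where `x = e^α` and `S_{≤a}^i(x) = Σ_{j=0}^a x^j C(j+i-1, i-1)`.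

Setup.  `W` is the affine Weyl group of `sl₂`: the Coxeter group on two
generators `r_0, r_1` with `m_{01} = ∞` (entry `0` of the Coxeter matrix).
The elements `σ_j` (with `σ_{2i} = (r_1r_0)^i`, `σ_{2i+1} = r_0 σ_{2i}`,
`σ_{-2i} = (r_0r_1)^i`, `σ_{-(2i+1)} = r_1 σ_{-2i}`) are given by the
alternating words `sigmaWord j` of length `|j|` ending in `r_0` for `j > 0`
and in `r_1` for `j < 0`.  The small-torus (level-zero, `e^δ = 1`)
localization: `W` acts on `F = Q(T)` with both simple reflections sending
`x = e^α` to `x⁻¹`, and `e^{α_1} = x`, `e^{α_0} = x⁻¹`.  The K-NilHecke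
framework (operators `T_i`, `T_w`, evaluation pairing `Pair`, Schubert
functions `ψ^v` with `⟨T_u, ψ^v⟩ = δ_{vu}`) is as before, and
`ψ^m_j := ψ^{σ_m}(σ_j)`.
-/
open scoped Classical

noncomputable section

/-- Left multiplication by `q : F` as an additive endomorphism of `F`. -/
def mulOp {F : Type*} [Field F] (q : F) : Module.End ℤ F :=
  (AddMonoidHom.mulLeft q).toIntLinearMap

/-- The action of a group element `w : W` on `F` as an additive endomorphism. -/
def grpOp {W F : Type*} [Field F] [Group W] [MulSemiringAction W F] (w : W) :
    Module.End ℤ F :=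
  (DistribMulAction.toAddMonoidHom F w).toIntLinearMap

/-- The Demazure element `T = (1 - a)⁻¹ (w - 1)` (with `a = e^{α_i}`,
`w = r_i`) as an operator on `F`. -/
def TOp {W F : Type*} [Field F] [Group W] [MulSemiringAction W F]
    (a : F) (w : W) : Module.End ℤ F :=
  mulOp (1 - a)⁻¹ * (grpOp w - 1)

/-- `T_ω = T_{i_1} ⋯ T_{i_N}` for a word `ω = (i_1, …, i_N)`. -/
def Tword {B W F : Type*} [Field F] [Group W] [MulSemiringAction W F]
    {M : CoxeterMatrix B} (cs : CoxeterSystem M W) (a : B → F) (ω : List B) :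
    Module.End ℤ F :=
  (ω.map (fun i => TOp (a i) (cs.simple i))).prod

/-- The alternating reduced word of `σ_j`: length `|j|`, ending in `0` if
`j ≥ 0` and in `1` if `j < 0`. -/
def sigmaWord (j : ℤ) : List (Fin 2) :=
  List.ofFn (fun k : Fin j.natAbs =>
    if (j.natAbs - 1 - (k : ℕ)) % 2 = 0 then (if 0 ≤ j then 0 else 1)
    else (if 0 ≤ j then 1 else 0))

/-- `S_{≤a}^m(x) = Σ_{j=0}^a x^j C(j+m-1, m-1)`, i.e. the sum
`h_0 + ⋯ + h_a` of complete homogeneous symmetric functions evaluated at `m`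
copies of `x` (so `S_{≤a}^0 = 1`). -/
def Sle {F : Type*} [Field F] (x : F) (m a : ℕ) : F :=
  if m = 0 then 1
  else ∑ j ∈ Finset.range (a + 1), x ^ j * ((j + m - 1).choose (m - 1) : F)

/-!
Acting on `F`, each `σ_n` (`n ≥ 0`) expands in the Demazure operators as
`σ_n = ∑_p c_{n,p} T_{σ_p}` with `c_{n,p} = (1 - z)^{|p|} S^{|p|}_{≤ ⌊e/2⌋}(z)`, where `z = σ_n • x`
and `e = n - |p|`, one less for `p < 0` (and `c_{n,p} = 0` for `e < 0`). Pairing with `ψ^{σ_m}`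
picks out `c_{n,m}`, which for even `n` is the claimed value.

The expansion is proved by induction on `n`. Left multiplication by `r_i = 1 + (1 - e^{α_i}) T_i`
moves `σ_p` to `σ_{p ± 1}`, and `T_i² = -T_i` where the move shortens `σ_p`, so the coefficients
obey a two-term recursion; it closes up by the Pascal-type rule
`S^{r+1}_{≤ a+1} = x S^{r+1}_{≤ a} + S^r_{≤ a+1}`. That the `σ_p` are distinct and the words
`sigmaWord p` reduced is read off the action of `W` on `ℤ` by the reflections `t ↦ ∓1 - t`,
under which `σ_p` sends `0` to `±p`.
-/

section Operators
variable {W F : Type*} [Field F] [Group W] [MulSemiringAction W F]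

theorem mulOp_eq_lmul (q : F) : mulOp q = Algebra.lmul ℤ F q := rfl

@[simp] theorem mulOp_zero : mulOp (0 : F) = 0 := map_zero (Algebra.lmul ℤ F)

@[simp] theorem mulOp_one : mulOp (1 : F) = 1 := map_one (Algebra.lmul ℤ F)

@[simp] theorem mulOp_apply (q f : F) : mulOp q f = q * f := rfl

@[simp] theorem grpOp_apply (w : W) (f : F) : grpOp (F := F) w f = w • f := rfl

theorem grpOp_mul (u v : W) : grpOp (F := F) (u * v) = grpOp u * grpOp v := by
  ext f; simp [mul_smul]

@[simp] theorem grpOp_one : grpOp (F := F) (1 : W) = 1 := by ext f; simp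

theorem grpOp_mul_mulOp (w : W) (q : F) :
    grpOp (F := F) w * mulOp q = mulOp (w • q) * grpOp w := by
  ext f; simp [smul_mul']

theorem TOp_apply (b : F) (s : W) (f : F) : TOp b s f = (1 - b)⁻¹ * (s • f - f) := rfl

theorem grpOp_eq_one_add_TOp {b : F} (hb : b ≠ 1) (s : W) :
    grpOp (F := F) s = 1 + mulOp (1 - b) * TOp b s := by
  have hb' : (1 : F) - b ≠ 0 := sub_ne_zero.2 hb.symm
  ext f
  simp only [LinearMap.add_apply, Module.End.mul_apply, Module.End.one_apply, TOp_apply,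
    mulOp_apply, grpOp_apply]
  field_simp
  ring

theorem TOp_mul_self {b : F} (hb0 : b ≠ 0) (hb1 : b ≠ 1) {s : W} (hsb : s • b = b⁻¹)
    (hs : s * s = 1) : TOp b s * TOp b s = -TOp b s := by
  have hb1' : (1 : F) - b ≠ 0 := sub_ne_zero.2 hb1.symm
  ext f
  have hss : s • s • f = f := by rw [← mul_smul, hs, one_smul]
  have hsc : s • (1 - b)⁻¹ = (1 - b⁻¹)⁻¹ := by rw [smul_inv'', smul_sub, smul_one, hsb]
  simp only [Module.End.mul_apply, LinearMap.neg_apply, TOp_apply, smul_mul', hsc, smul_sub, hss]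
  field_simp
  ring

end Operators

section Step
variable {W F ι : Type*} [Field F] [Group W] [MulSemiringAction W F]

theorem grpOp_mul_sum_eq_sum (s : W) (b : F) (T : Module.End ℤ F)
    (hs : grpOp s = 1 + mulOp (1 - b) * T) (τ : ι → Module.End ℤ F) (π : ι → ι)
    (asc : ι → Prop) [DecidablePred asc] (S : Finset ι) (hπS : ∀ p ∈ S, π p ∈ S)
    (hππ : ∀ p, π (π p) = p) (hasc : ∀ p, asc (π p) ↔ ¬asc p)
    (hT : ∀ p ∈ S, T * τ p = if asc p then τ (π p) else -τ p) (c : ι → F) :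
    grpOp s * ∑ p ∈ S, mulOp (c p) * τ p
      = ∑ p ∈ S, mulOp (if asc p then s • c p
          else b * s • c p + (1 - b) * s • c (π p)) * τ p := by
  set d : ι → F := fun p => (1 - b) * s • c p
  have hterm : ∀ p ∈ S, grpOp s * (mulOp (c p) * τ p)
      = mulOp (s • c p) * τ p + if asc p then mulOp (d p) * τ (π p)
          else -(mulOp (d p) * τ p) := by
    intro p hp
    have hd : mulOp (s • c p) * mulOp (1 - b) = mulOp (d p) := by
      simp only [d, mulOp_eq_lmul, ← map_mul, mul_comm]
    rw [← mul_assoc, grpOp_mul_mulOp, mul_assoc, hs, add_mul, one_mul, mul_add, mul_assoc,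
      hT p hp, ← mul_assoc, hd]
    split_ifs <;> simp only [mul_neg]
  have hswap : ∑ p ∈ S, (if asc p then mulOp (d p) * τ (π p) else 0)
      = ∑ p ∈ S, (if asc p then 0 else mulOp (d (π p)) * τ p) :=
    Finset.sum_nbij' π π hπS hπS (fun p _ => hππ p) (fun p _ => hππ p)
      (fun p _ => by simp only [hasc, hππ, ite_not])
  have hsplit : ∀ p, (if asc p then mulOp (d p) * τ (π p) else -(mulOp (d p) * τ p))
      = (if asc p then mulOp (d p) * τ (π p) else 0)
        + (if asc p then 0 else -(mulOp (d p) * τ p)) := by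
    intro p; split_ifs <;> simp
  simp only [Finset.mul_sum, Finset.sum_congr rfl hterm, hsplit, Finset.sum_add_distrib, hswap]
  rw [← Finset.sum_add_distrib, ← Finset.sum_add_distrib]
  refine Finset.sum_congr rfl fun p _ => ?_
  split_ifs
  · simp
  · simp only [mulOp_eq_lmul, ← neg_mul, ← add_mul, ← map_neg, ← map_add, d]
    congr 2
    ring

end Step

def letter (p : ℤ) : Fin 2 := if Even p then 0 else 1

theorem letter_congr {p q : ℤ} (h : Even (p - q)) : letter p = letter q := by
  simp only [letter, Int.even_sub.1 h]

theorem sigmaWord_length (p : ℤ) : (sigmaWord p).length = p.natAbs := by simp [sigmaWord]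

theorem sigmaWord_add_one_of_nonneg {p : ℤ} (hp : 0 ≤ p) :
    sigmaWord (p + 1) = letter p :: sigmaWord p := by
  obtain ⟨n, rfl⟩ := Int.eq_ofNat_of_zero_le hp
  have h1 : ((n : ℤ) + 1).natAbs = n + 1 := by omega
  unfold sigmaWord
  simp only [h1, Int.natAbs_natCast, List.ofFn_succ, Fin.val_cast, Fin.val_zero, Fin.val_succ,
    show (0 : ℤ) ≤ n + 1 by omega, hp, if_true, letter, Int.even_iff]
  congr 1
  · split_ifs <;> first | rfl | omega
  · congr 1; funext k; congr 2; omega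

theorem sigmaWord_of_neg {p : ℤ} (hp : p < 0) :
    sigmaWord p = letter p :: sigmaWord (p + 1) := by
  obtain ⟨n, rfl⟩ : ∃ n : ℕ, p = -n - 1 := ⟨(-p - 1).toNat, by omega⟩
  have h1 : (-(n : ℤ) - 1).natAbs = n + 1 := by omega
  have h2 : (-(n : ℤ) - 1 + 1).natAbs = n := by omega
  unfold sigmaWord
  simp only [h1, h2, List.ofFn_succ, Fin.val_cast, Fin.val_zero, Fin.val_succ, not_le.2 hp,
    if_false, letter, Int.even_iff]
  congr 1
  · split_ifs <;> first | rfl | omega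
  · congr 1; funext k
    have hk : ¬(0 : ℤ) ≤ -n - 1 + 1 := by have := k.2; omega
    simp only [hk, if_false]
    congr 2; omega

-- `r_{letter n} σ_p = σ_{partner n p}`, a lengthening move iff `|p| < |partner n p|`.
def partner (n p : ℤ) : ℤ := if Even (p - n) then p + 1 else p - 1

theorem partner_partner (n p : ℤ) : partner n (partner n p) = p := by
  simp only [partner, Int.even_iff]
  split_ifs <;> omega

theorem natAbs_partner_ne (n p : ℤ) : (partner n p).natAbs ≠ p.natAbs := by
  simp only [partner, Int.even_iff]
  split_ifs <;> omega

theorem partner_mem_Icc {n : ℕ} {p : ℤ} (hp : p ∈ Finset.Icc (-(n : ℤ)) (n + 1)) :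
    partner n p ∈ Finset.Icc (-(n : ℤ)) (n + 1) := by
  rw [Finset.mem_Icc] at hp ⊢
  simp only [partner, Int.even_iff]
  split_ifs <;> omega

section Dihedral
variable {W : Type*} [Group W] {M : CoxeterMatrix (Fin 2)} (cs : CoxeterSystem M W)

theorem wordProd_sigmaWord_add_one (p : ℤ) :
    cs.wordProd (sigmaWord (p + 1)) = cs.simple (letter p) * cs.wordProd (sigmaWord p) := by
  rcases le_or_gt 0 p with hp | hp
  · rw [sigmaWord_add_one_of_nonneg hp, cs.wordProd_cons]
  · rw [sigmaWord_of_neg hp, cs.wordProd_cons, cs.simple_mul_simple_cancel_left]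

def reflectionPerm (i : Fin 2) : Equiv.Perm ℤ := Equiv.subLeft (if i = 0 then -1 else 1)

theorem reflectionPerm_isLiftable (hM : M 0 1 = 0) : M.IsLiftable reflectionPerm := by
  intro i j
  fin_cases i <;> fin_cases j <;>
    simp [hM, M.symmetric 1 0, reflectionPerm, Equiv.ext_iff, Equiv.Perm.mul_apply]

def dihedralRep (hM : M 0 1 = 0) : W →* Equiv.Perm ℤ :=
  cs.lift ⟨reflectionPerm, reflectionPerm_isLiftable hM⟩

theorem dihedralRep_simple (hM : M 0 1 = 0) (i : Fin 2) (t : ℤ) :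
    dihedralRep cs hM (cs.simple i) t = (if i = 0 then -1 else 1) - t := by
  simp [dihedralRep, cs.lift_apply_simple, reflectionPerm]

theorem abs_dihedralRep_wordProd_le (hM : M 0 1 = 0) (ω : List (Fin 2)) :
    |dihedralRep cs hM (cs.wordProd ω) 0| ≤ ω.length := by
  induction ω with
  | nil => simp
  | cons i ω ih =>
    rw [cs.wordProd_cons, map_mul, Equiv.Perm.mul_apply, dihedralRep_simple,
      List.length_cons, Nat.cast_succ]
    rw [abs_le] at ih ⊢
    constructor <;> split_ifs <;> omega

theorem dihedralRep_sigmaWord (hM : M 0 1 = 0) (p : ℤ) :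
    dihedralRep cs hM (cs.wordProd (sigmaWord p)) 0 = if Even p then p else -p := by
  have hstep : ∀ p : ℤ, dihedralRep cs hM (cs.wordProd (sigmaWord (p + 1))) 0
      = (if Even p then -1 else 1) - dihedralRep cs hM (cs.wordProd (sigmaWord p)) 0 := by
    intro p
    rw [wordProd_sigmaWord_add_one, map_mul, Equiv.Perm.mul_apply, dihedralRep_simple]
    by_cases h : Even p <;> simp [letter, h]
  induction p using Int.induction_on with
  | zero => simp [sigmaWord]
  | succ i ih =>
    rw [hstep, ih]
    simp only [Int.even_iff]
    split_ifs <;> omega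
  | pred i ih =>
    have := hstep (-i - 1)
    rw [sub_add_cancel, ih] at this
    simp only [Int.even_iff] at this ⊢
    split_ifs at this ⊢ <;> omega

theorem wordProd_sigmaWord_injective (hM : M 0 1 = 0) :
    Function.Injective fun p => cs.wordProd (sigmaWord p) := by
  intro p q h
  have := congrArg (fun w => dihedralRep cs hM w 0) h
  simp only [dihedralRep_sigmaWord, Int.even_iff] at this
  split_ifs at this <;> omega

theorem sigmaWord_isReduced (hM : M 0 1 = 0) (p : ℤ) : cs.IsReduced (sigmaWord p) := by
  refine le_antisymm (cs.length_wordProd_le _) ?_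
  obtain ⟨ω, hω, hσ⟩ := cs.exists_isReduced (cs.wordProd (sigmaWord p))
  have hb := abs_dihedralRep_wordProd_le cs hM ω
  rw [← hσ, dihedralRep_sigmaWord, apply_ite abs, abs_neg, ite_self,
    Int.abs_eq_natAbs] at hb
  rw [sigmaWord_length, hσ, hω.eq]
  exact_mod_cast hb

end Dihedral

section Demazure
variable {W F : Type*} [Field F] [Group W] [MulSemiringAction W F]
  {M : CoxeterMatrix (Fin 2)} (cs : CoxeterSystem M W) (a : Fin 2 → F)

theorem Tword_sigmaWord_add_one {p : ℤ} (hp : 0 ≤ p) :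
    Tword cs a (sigmaWord (p + 1))
      = TOp (a (letter p)) (cs.simple (letter p)) * Tword cs a (sigmaWord p) := by
  simp [sigmaWord_add_one_of_nonneg hp, Tword]

theorem Tword_sigmaWord_of_neg {p : ℤ} (hp : p < 0) :
    Tword cs a (sigmaWord p)
      = TOp (a (letter p)) (cs.simple (letter p)) * Tword cs a (sigmaWord (p + 1)) := by
  conv_lhs => rw [sigmaWord_of_neg hp]
  simp [Tword]

theorem TOp_mul_Tword_sigmaWord
    (hsq : ∀ i, TOp (a i) (cs.simple i) * TOp (a i) (cs.simple i) = -TOp (a i) (cs.simple i))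
    (n p : ℤ) :
    TOp (a (letter n)) (cs.simple (letter n)) * Tword cs a (sigmaWord p)
      = if p.natAbs < (partner n p).natAbs then Tword cs a (sigmaWord (partner n p))
        else -Tword cs a (sigmaWord p) := by
  unfold partner
  by_cases hpar : Even (p - n)
  · rw [if_pos hpar, ← letter_congr hpar]
    rcases le_or_gt 0 p with hp | hp
    · rw [if_pos (by omega), Tword_sigmaWord_add_one cs a hp]
    · rw [if_neg (by omega), Tword_sigmaWord_of_neg cs a hp, ← mul_assoc, hsq, neg_mul]
  · have hl : letter (p - 1) = letter n :=
      letter_congr (by rw [Int.even_iff] at hpar ⊢; omega)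
    rw [if_neg hpar, ← hl]
    rcases le_or_gt p 0 with hp | hp
    · rw [if_pos (by omega), Tword_sigmaWord_of_neg cs a (by omega : p - 1 < 0), sub_add_cancel]
    · rw [if_neg (by omega)]
      have h := Tword_sigmaWord_add_one cs a (by omega : 0 ≤ p - 1)
      rw [sub_add_cancel] at h
      rw [h, ← mul_assoc, hsq, neg_mul]

end Demazure

section Coefficients
variable {F F' : Type*} [Field F] [Field F']

@[simp] theorem Sle_zero_left (z : F) (a : ℕ) : Sle z 0 a = 1 := rfl

@[simp] theorem Sle_zero_right (z : F) (m : ℕ) : Sle z m 0 = 1 := by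
  unfold Sle; split_ifs <;> simp

theorem Sle_succ_left (z : F) (r a : ℕ) :
    Sle z (r + 1) a = ∑ j ∈ Finset.range (a + 1), z ^ j * ((j + r).choose r : F) := by
  simp [Sle]

theorem Sle_succ_succ (z : F) (r a : ℕ) :
    Sle z (r + 1) (a + 1) = z * Sle z (r + 1) a + Sle z r (a + 1) := by
  rw [Sle_succ_left, Finset.sum_range_succ', Sle_succ_left, Finset.mul_sum]
  rcases r with _ | t
  · simp [pow_succ, mul_comm, Finset.sum_range_succ']
  · have pascal : ∀ j : ℕ, ((j + 1 + (t + 1)).choose (t + 1) : F)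
        = ((j + 1 + t).choose t : F) + ((j + (t + 1)).choose (t + 1) : F) := by
      intro j
      rw [show j + 1 + (t + 1) = (j + 1 + t) + 1 by ring, Nat.choose_succ_succ',
        show j + 1 + t = j + (t + 1) by ring, Nat.cast_add, add_comm]
    simp only [pascal, mul_add, Finset.sum_add_distrib, Sle_succ_left,
      Finset.sum_range_succ' _ (a + 1)]
    simp only [zero_add, Nat.choose_self, ← mul_assoc, ← pow_succ']
    ring

def truncSle (z : F) (m : ℕ) (e : ℤ) : F :=
  if 0 ≤ e then (1 - z) ^ m * Sle z m (e.toNat / 2) else 0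

theorem truncSle_zero_left (z : F) (e : ℤ) : truncSle z 0 e = if 0 ≤ e then 1 else 0 := by
  simp [truncSle]

theorem truncSle_add_one_of_even (z : F) (m : ℕ) {e : ℤ} (he : Even e) :
    truncSle z m (e + 1) = truncSle z m e := by
  rw [Int.even_iff] at he
  unfold truncSle
  by_cases h : 0 ≤ e
  · rw [if_pos h, if_pos (by omega), show (e + 1).toNat / 2 = e.toNat / 2 by omega]
  · rw [if_neg h, if_neg (by omega)]

theorem truncSle_succ_add_one_of_odd (z : F) (m : ℕ) {e : ℤ} (he : Odd e) :
    truncSle z (m + 1) (e + 1) = z * truncSle z (m + 1) e + (1 - z) * truncSle z m (e + 1) := by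
  rw [Int.odd_iff] at he
  unfold truncSle
  rcases lt_trichotomy e (-1) with he' | rfl | he'
  · simp [show ¬(0 : ℤ) ≤ e + 1 by omega, show ¬(0 : ℤ) ≤ e by omega]
  · simp [pow_succ]; ring
  · obtain ⟨A, hA, hA'⟩ : ∃ A, e.toNat / 2 = A ∧ (e + 1).toNat / 2 = A + 1 :=
      ⟨e.toNat / 2, rfl, by omega⟩
    simp only [show (0 : ℤ) ≤ e + 1 by omega, show (0 : ℤ) ≤ e by omega, if_true, hA, hA',
      Sle_succ_succ]
    ring

/-- `sigmaCoeff (σ_n • x) n p` is the coefficient `c_{n,p}` of `T_{σ_p}` in `σ_n`. -/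
def sigmaCoeff (z : F) (n : ℕ) (p : ℤ) : F :=
  if 0 ≤ p then truncSle z p.natAbs (n - p) else truncSle z p.natAbs (n + p - 1)

theorem sigmaCoeff_succ_of_even (z : F) (n : ℕ) {q : ℤ} (hpar : Even (q - n)) :
    sigmaCoeff z (n + 1) q = if 0 ≤ q then sigmaCoeff z n q
      else z * sigmaCoeff z n q + (1 - z) * sigmaCoeff z n (q + 1) := by
  rw [Int.even_iff] at hpar
  rcases le_or_gt 0 q with hq | hq
  · rw [if_pos hq, sigmaCoeff, sigmaCoeff, if_pos hq, if_pos hq, Nat.cast_succ,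
      show (n : ℤ) + 1 - q = n - q + 1 by ring]
    exact truncSle_add_one_of_even z _ (Int.even_iff.2 (by omega))
  obtain ⟨m, hm, hm'⟩ : ∃ m : ℕ, q.natAbs = m + 1 ∧ (q + 1).natAbs = m :=
    ⟨(q + 1).natAbs, by omega, rfl⟩
  rw [if_neg (by omega), sigmaCoeff, sigmaCoeff, if_neg (by omega), if_neg (by omega), hm,
    Nat.cast_succ, show (n : ℤ) + 1 + q - 1 = n + q - 1 + 1 by ring,
    truncSle_succ_add_one_of_odd z m (Int.odd_iff.2 (by omega)), sigmaCoeff]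
  congr 2
  split_ifs with h
  · obtain rfl : m = 0 := by omega
    rw [hm', truncSle_zero_left, truncSle_zero_left, if_pos (by omega), if_pos (by omega)]
  · rw [hm']; ring_nf

theorem sigmaCoeff_succ_of_not_even (z : F) (n : ℕ) {q : ℤ} (hpar : ¬Even (q - n)) :
    sigmaCoeff z (n + 1) q = if q ≤ 0 then sigmaCoeff z n q
      else z * sigmaCoeff z n q + (1 - z) * sigmaCoeff z n (q - 1) := by
  rw [Int.even_iff] at hpar
  rcases lt_trichotomy q 0 with hq | rfl | hq
  · rw [if_pos hq.le, sigmaCoeff, sigmaCoeff, if_neg (by omega), if_neg (by omega),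
      Nat.cast_succ, show (n : ℤ) + 1 + q - 1 = n + q - 1 + 1 by ring]
    exact truncSle_add_one_of_even z _ (Int.even_iff.2 (by omega))
  · simp only [sigmaCoeff, le_refl, if_true, Int.natAbs_zero, truncSle_zero_left]
    rw [if_pos (by omega), if_pos (by omega)]
  obtain ⟨m, hm, hm'⟩ : ∃ m : ℕ, q.natAbs = m + 1 ∧ (q - 1).natAbs = m :=
    ⟨(q - 1).natAbs, by omega, rfl⟩
  rw [if_neg (by omega), sigmaCoeff, sigmaCoeff, sigmaCoeff, if_pos hq.le, if_pos hq.le,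
    if_pos (by omega), hm, hm', Nat.cast_succ, show (n : ℤ) + 1 - q = n - q + 1 by ring,
    show (n : ℤ) - (q - 1) = n - q + 1 by ring]
  exact truncSle_succ_add_one_of_odd z m (Int.odd_iff.2 (by omega))

theorem sigmaCoeff_succ (z : F) (n : ℕ) (q : ℤ) :
    sigmaCoeff z (n + 1) q
      = if q.natAbs < (partner n q).natAbs then sigmaCoeff z n q
        else z * sigmaCoeff z n q + (1 - z) * sigmaCoeff z n (partner n q) := by
  unfold partner
  by_cases hpar : Even (q - n)
  · rw [if_pos hpar, sigmaCoeff_succ_of_even z n hpar]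
    exact if_congr (by omega) rfl rfl
  · rw [if_neg hpar, sigmaCoeff_succ_of_not_even z n hpar]
    exact if_congr (by omega) rfl rfl

theorem sigmaCoeff_eq_zero (z : F) (n : ℕ) {p : ℤ}
    (hp : n < p ∨ p < 0 ∧ p ≤ -n) : sigmaCoeff z n p = 0 := by
  unfold sigmaCoeff truncSle
  split_ifs <;> first | rfl | omega

theorem map_Sle (f : F →+* F') (z : F) (m a : ℕ) : f (Sle z m a) = Sle (f z) m a := by
  unfold Sle; split_ifs <;> simp

theorem map_sigmaCoeff (f : F →+* F') (z : F) (n : ℕ) (p : ℤ) :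
    f (sigmaCoeff z n p) = sigmaCoeff (f z) n p := by
  unfold sigmaCoeff truncSle; split_ifs <;> simp [map_Sle]

end Coefficients

/-- `altInv x n = σ_n • x`. -/
def altInv {F : Type*} [Field F] (x : F) (n : ℕ) : F := if Even n then x else x⁻¹

section Expansion
variable {W F : Type*} [Field F] [Group W] [MulSemiringAction W F]
  {M : CoxeterMatrix (Fin 2)} (cs : CoxeterSystem M W) {x : F} {a : Fin 2 → F}

theorem simple_smul_altInv (hact : ∀ i, cs.simple i • x = x⁻¹) (i : Fin 2) (n : ℕ) :
    cs.simple i • altInv x n = altInv x (n + 1) := by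
  by_cases h : Even n <;> simp [altInv, h, hact, parity_simps]

theorem a_letter_eq_altInv (ha0 : a 0 = x⁻¹) (ha1 : a 1 = x) (n : ℕ) :
    a (letter n) = altInv x (n + 1) := by
  by_cases h : Even n <;> simp [altInv, letter, h, ha0, ha1, parity_simps]

theorem TOp_mul_self_simple (hx0 : x ≠ 0) (hx1 : x ≠ 1) (hact : ∀ i, cs.simple i • x = x⁻¹)
    (ha0 : a 0 = x⁻¹) (ha1 : a 1 = x) (i : Fin 2) :
    TOp (a i) (cs.simple i) * TOp (a i) (cs.simple i) = -TOp (a i) (cs.simple i) := by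
  refine TOp_mul_self ?_ ?_ ?_ (cs.simple_mul_simple_self i) <;> fin_cases i <;>
    simp [ha0, ha1, hx0, hx1, hact]

-- `[-n, n + 1]` is the smallest window containing the support that is closed under `partner n`.
theorem grpOp_sigmaWord_eq_sum (hx0 : x ≠ 0) (hx1 : x ≠ 1) (hact : ∀ i, cs.simple i • x = x⁻¹)
    (ha0 : a 0 = x⁻¹) (ha1 : a 1 = x) (n : ℕ) :
    grpOp (cs.wordProd (sigmaWord n)) = ∑ p ∈ Finset.Icc (-(n : ℤ)) (n + 1),
      mulOp (sigmaCoeff (altInv x n) n p) * Tword cs a (sigmaWord p) := by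
  induction n with
  | zero =>
    rw [show Finset.Icc (-((0 : ℕ) : ℤ)) ((0 : ℕ) + 1) = {0, 1} by ext; simp; omega,
      Finset.sum_pair zero_ne_one]
    simp [sigmaCoeff, truncSle, sigmaWord, Tword]
  | succ n ih =>
    have hb : a (letter n) ≠ 1 := by
      rw [a_letter_eq_altInv ha0 ha1]; unfold altInv; split_ifs <;> simpa using hx1
    have hc : ∀ p, cs.simple (letter n) • sigmaCoeff (altInv x n) n p
        = sigmaCoeff (altInv x (n + 1)) n p := by
      intro p
      rw [← MulSemiringAction.toRingHom_apply, map_sigmaCoeff, MulSemiringAction.toRingHom_apply,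
        simple_smul_altInv cs hact]
    rw [Nat.cast_succ, wordProd_sigmaWord_add_one, grpOp_mul, ih,
      grpOp_mul_sum_eq_sum _ _ _ (grpOp_eq_one_add_TOp hb _) _ (partner n)
        (fun p => p.natAbs < (partner n p).natAbs) _ (fun p hp => partner_mem_Icc hp)
        (partner_partner n) (fun p => by have := natAbs_partner_ne n p; rw [partner_partner]; omega)
        (fun p _ => TOp_mul_Tword_sigmaWord cs a (TOp_mul_self_simple cs hx0 hx1 hact ha0 ha1) n p)]
    simp only [hc, a_letter_eq_altInv ha0 ha1, ← sigmaCoeff_succ]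
    refine Finset.sum_subset (Finset.Icc_subset_Icc (by omega) (by omega)) fun p hbig hp => ?_
    rw [sigmaCoeff_eq_zero _ _ (by simp only [Finset.mem_Icc] at hbig hp ⊢; push_cast; omega)]
    simp

end Expansion

theorem sl2_grassmannian_localization
    {W F : Type*} [Field F] [Group W] [MulSemiringAction W F]
    {M : CoxeterMatrix (Fin 2)} (cs : CoxeterSystem M W)
    (hM01 : M 0 1 = 0)                 -- `m_{01} = ∞`: affine Weyl group of sl₂
    (x : F) (hx0 : x ≠ 0) (hx1 : x ≠ 1)
    (hact : ∀ i : Fin 2, cs.simple i • x = x⁻¹)  -- level-zero action of r_0, r_1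
    (a : Fin 2 → F) (ha0 : a 0 = x⁻¹) (ha1 : a 1 = x)  -- e^{α_0}, e^{α_1} at δ = 0
    (Tw : W → Module.End ℤ F)
    (hTw : ∀ ω : List (Fin 2), cs.IsReduced ω → Tw (cs.wordProd ω) = Tword cs a ω)
    (Pair : Module.End ℤ F → (W → F) → F)
    (hPadd : ∀ x y φ, Pair (x + y) φ = Pair x φ + Pair y φ)
    (hPmul : ∀ (q : F) y φ, Pair (mulOp q * y) φ = q * Pair y φ)
    (hPgrp : ∀ (w : W) (φ : W → F), Pair (grpOp w) φ = φ w)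
    (ψ : ℤ → W → F)        -- ψ m = ψ^{σ_m}
    (hψ : ∀ m j : ℤ, Pair (Tw (cs.wordProd (sigmaWord j))) (ψ m)
      = if cs.wordProd (sigmaWord m) = cs.wordProd (sigmaWord j) then 1 else 0) :
    ∀ i a' m : ℕ, (m = 2 * i ∨ m + 1 = 2 * i) →
      ψ (m : ℤ) (cs.wordProd (sigmaWord (2 * (i : ℤ) + 2 * (a' : ℤ))))
        = (1 - x) ^ m * Sle x m a' := by
  intro i a' m hm
  obtain ⟨n, hn, hn2⟩ : ∃ n : ℕ, 2 * (i : ℤ) + 2 * a' = n ∧ n = 2 * i + 2 * a' :=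
    ⟨2 * i + 2 * a', by push_cast; ring, rfl⟩
  have hpair : ∀ c p, Pair (mulOp c * Tword cs a (sigmaWord p)) (ψ m)
      = c * if (m : ℤ) = p then 1 else 0 := by
    intro c p
    rw [← hTw _ (sigmaWord_isReduced cs hM01 p), hPmul, hψ,
      (wordProd_sigmaWord_injective cs hM01).eq_iff]
    congr
  let pairψ : Module.End ℤ F →+ F := AddMonoidHom.mk' (Pair · (ψ m)) (hPadd · · _)
  calc ψ m (cs.wordProd (sigmaWord (2 * i + 2 * a')))
      = pairψ (grpOp (cs.wordProd (sigmaWord n))) := by rw [hn]; exact (hPgrp _ _).symm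
    _ = sigmaCoeff (altInv x n) n m := by
      rw [grpOp_sigmaWord_eq_sum cs hx0 hx1 hact ha0 ha1, map_sum]
      simp only [pairψ, AddMonoidHom.mk'_apply, hpair, mul_ite, mul_one, mul_zero,
        Finset.sum_ite_eq, Finset.mem_Icc]
      rw [if_pos (by omega)]
    _ = (1 - x) ^ m * Sle x m a' := by
      rw [altInv, if_pos (by rw [Nat.even_iff]; omega), sigmaCoeff, if_pos (by omega), truncSle,
        if_pos (by omega), Int.natAbs_natCast, show (n - m : ℤ).toNat / 2 = a' by omega]
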